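/- arXiv:2403.14875 — 6 statements merged into one kernel-verified Lean document; each statement's English description precedes it below -/
import Mathlib

section
/- Let G be a group with presentation ⟨x₁,…,x_k | r₁,…,r_j⟩; that is, let π : F_k → G be a surjective group homomorphism from the free group F_k on generators x₁,…,x_k whose kernel is the normal closure of the elements r₁,…,r_j ∈ F_k. Then the Mihailova subgroup M(G) = {(x,y) ∈ F_k × F_k : π(x) = π(y)} is generated by the k + j elements (x₁,x₁), …, (x_k,x_k), (1,r₁), …, (1,r_j). -/
/-- **Generators of the Mihailova subgroup.**
If `π : F_k → G` is a surjective homomorphism from the free group on `k`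
generators whose kernel is the normal closure of the relators `r₁, …, r_j`,
then the Mihailova subgroup `M(G) = {(x, y) : π x = π y}` of `F_k × F_k` is
generated by the `k + j` elements `(xᵢ, xᵢ)` and `(1, rᵢ)`. -/
theorem mihailova_generators {k j : ℕ} {G : Type*} [Group G]
    (π : FreeGroup (Fin k) →* G) (hsurj : Function.Surjective π)
    (r : Fin j → FreeGroup (Fin k))
    (hker : π.ker = Subgroup.normalClosure (Set.range r)) :
    ∀ p : FreeGroup (Fin k) × FreeGroup (Fin k),
      p ∈ Subgroup.closure
          ((Set.range fun i : Fin k => (FreeGroup.of i, FreeGroup.of i)) ∪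
            (Set.range fun i : Fin j => ((1 : FreeGroup (Fin k)), r i))) ↔
        π p.1 = π p.2 := by
  set H := Subgroup.closure
      ((Set.range fun i : Fin k => (FreeGroup.of i, FreeGroup.of i)) ∪
        (Set.range fun i : Fin j => ((1 : FreeGroup (Fin k)), r i))) with hH
  have hdiag : ∀ x : FreeGroup (Fin k), (x, x) ∈ H := by
    intro x
    induction x using FreeGroup.induction_on with
    | C1 => exact one_mem H
    | of i => exact Subgroup.subset_closure (Or.inl ⟨i, rfl⟩)
    | inv_of i h => exact (inv_mem h : ((FreeGroup.of i)⁻¹, (FreeGroup.of i)⁻¹) ∈ H)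
    | mul a b ha hb => exact mul_mem ha hb
  -- subgroup of elements n with (1, n) ∈ H
  have hrel : ∀ i : Fin j, ((1 : FreeGroup (Fin k)), r i) ∈ H :=
    fun i => Subgroup.subset_closure (Or.inr ⟨i, rfl⟩)
  let N : Subgroup (FreeGroup (Fin k)) :=
    { carrier := {n | ((1 : FreeGroup (Fin k)), n) ∈ H}
      one_mem' := one_mem H
      mul_mem' := fun {a b} ha hb => by
        have := mul_mem (show ((1 : FreeGroup (Fin k)), a) ∈ H from ha)
          (show ((1 : FreeGroup (Fin k)), b) ∈ H from hb)
        simpa using this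
      inv_mem' := fun {a} ha => by
        have := inv_mem (show ((1 : FreeGroup (Fin k)), a) ∈ H from ha)
        simpa using this }
  have hNnormal : N.Normal := by
    constructor
    intro n hn g
    have : ((g, g) * (1, n) * (g, g)⁻¹ : FreeGroup (Fin k) × FreeGroup (Fin k)) ∈ H :=
      mul_mem (mul_mem (hdiag g) hn) (inv_mem (hdiag g))
    simp [Prod.ext_iff, mul_assoc] at this
    show ((1 : FreeGroup (Fin k)), g * n * g⁻¹) ∈ H
    simpa [mul_assoc] using this
  have hNC : Subgroup.normalClosure (Set.range r) ≤ N :=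
    Subgroup.normalClosure_le_normal (fun x ⟨i, hi⟩ => hi ▸ hrel i)
  intro p
  constructor
  · intro hp
    induction hp using Subgroup.closure_induction with
    | mem x hx =>
      rcases hx with ⟨i, rfl⟩ | ⟨i, rfl⟩
      · rfl
      · have : r i ∈ π.ker := hker ▸ Subgroup.subset_normalClosure ⟨i, rfl⟩
        simpa using this.symm
    | one => rfl
    | mul a b _ _ ha hb => simp [ha, hb]
    | inv a _ ha => simp [ha]
  · intro hp
    obtain ⟨x, y⟩ := p
    simp only at hp
    have hmem : x⁻¹ * y ∈ N := by
      apply hNC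
      rw [← hker]
      simp [MonoidHom.mem_ker, hp]
    have : ((x, x) * (1, x⁻¹ * y) : FreeGroup (Fin k) × FreeGroup (Fin k)) ∈ H :=
      mul_mem (hdiag x) hmem
    simpa [Prod.ext_iff, mul_assoc] using this
end

section
/- Let G be a group with presentation ⟨x₁,…,x_k | r₁,…,r_j⟩; that is, let π : F_k → G be a surjective group homomorphism from the free group F_k on generators x₁,…,x_k whose kernel is the normal closure of r₁,…,r_j ∈ F_k. Then the subgroup M₁(G) = {(x,y,z) ∈ F_k × F_k × F_k : x = y and π(y) = π(z)} is generated by the k + j elements (x₁,x₁,x₁), …, (x_k,x_k,x_k), (1,1,r₁), …, (1,1,r_j). -/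
/-- **Generators of the variant Mihailova subgroup `M₁(G)`.**
If `π : F_k → G` is a surjective homomorphism from the free group on `k`
generators whose kernel is the normal closure of the relators `r₁, …, r_j`,
then `M₁(G) = {(x, y, z) : x = y ∧ π y = π z}` of `F_k × F_k × F_k` is
generated by the `k + j` elements `(xᵢ, xᵢ, xᵢ)` and `(1, 1, rᵢ)`. -/
theorem mihailova_variant_generators {k j : ℕ} {G : Type*} [Group G]
    (π : FreeGroup (Fin k) →* G) (hsurj : Function.Surjective π)
    (r : Fin j → FreeGroup (Fin k))
    (hker : π.ker = Subgroup.normalClosure (Set.range r)) :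
    ∀ p : FreeGroup (Fin k) × FreeGroup (Fin k) × FreeGroup (Fin k),
      p ∈ Subgroup.closure
          ((Set.range fun i : Fin k =>
              (FreeGroup.of i, FreeGroup.of i, FreeGroup.of i)) ∪
            (Set.range fun i : Fin j =>
              ((1 : FreeGroup (Fin k)), (1 : FreeGroup (Fin k)), r i))) ↔
        (p.1 = p.2.1 ∧ π p.2.1 = π p.2.2) := by
  set S := ((Set.range fun i : Fin k =>
              (FreeGroup.of i, FreeGroup.of i, FreeGroup.of i)) ∪
            (Set.range fun i : Fin j =>
              ((1 : FreeGroup (Fin k)), (1 : FreeGroup (Fin k)), r i))) with hS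
  set H := Subgroup.closure S with hH
  -- diagonal elements lie in H
  have hdiag : ∀ w : FreeGroup (Fin k), (w, w, w) ∈ H := by
    intro w
    induction w using FreeGroup.induction_on with
    | C1 => exact one_mem H
    | of i => exact Subgroup.subset_closure (Or.inl ⟨i, rfl⟩)
    | inv_of i h => simpa using inv_mem h
    | mul a b ha hb => simpa using mul_mem ha hb
  -- the subgroup of w with (1,1,w) ∈ H
  let N : Subgroup (FreeGroup (Fin k)) :=
  { carrier := {w | ((1 : FreeGroup (Fin k)), (1 : FreeGroup (Fin k)), w) ∈ H}
    one_mem' := one_mem H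
    mul_mem' := fun {a b} (ha : _ ∈ H) (hb : _ ∈ H) => by simpa using mul_mem ha hb
    inv_mem' := fun {a} (ha : _ ∈ H) => by simpa using inv_mem ha }
  have hNnormal : N.Normal := by
    constructor
    intro n (hn : _ ∈ H) g
    have := mul_mem (mul_mem (hdiag g) hn) (inv_mem (hdiag g))
    show _ ∈ H
    simpa [mul_assoc] using this
  have hrange : Set.range r ⊆ (N : Set (FreeGroup (Fin k))) := by
    rintro _ ⟨i, rfl⟩
    exact Subgroup.subset_closure (Or.inr ⟨i, rfl⟩)
  have hNC : Subgroup.normalClosure (Set.range r) ≤ N :=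
    Subgroup.normalClosure_le_normal hrange
  intro p
  constructor
  · intro hp
    refine Subgroup.closure_induction ?_ ⟨rfl, rfl⟩ ?_ ?_ hp
    · rintro q (⟨i, rfl⟩ | ⟨i, rfl⟩)
      · exact ⟨rfl, rfl⟩
      · refine ⟨rfl, ?_⟩
        have : r i ∈ π.ker := by
          rw [hker]; exact Subgroup.subset_normalClosure ⟨i, rfl⟩
        simpa using this.symm
    · rintro a b _ _ ⟨ha1, ha2⟩ ⟨hb1, hb2⟩
      exact ⟨by simp [Prod.fst_mul, Prod.snd_mul, ha1, hb1],
        by simp [Prod.fst_mul, Prod.snd_mul, map_mul, ha2, hb2]⟩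
    · rintro a _ ⟨ha1, ha2⟩
      exact ⟨by simp [ha1], by simp [ha2]⟩
  · obtain ⟨x, y, z⟩ := p
    rintro ⟨h1, h2⟩
    dsimp at h1 h2
    subst h1
    have hk : x⁻¹ * z ∈ π.ker := by
      simp [MonoidHom.mem_ker, h2]
    have hz : ((1 : FreeGroup (Fin k)), (1 : FreeGroup (Fin k)), x⁻¹ * z) ∈ H :=
      hNC (hker ▸ hk)
    have := mul_mem (hdiag x) hz
    simpa using this
end

section
/- Let F₂ be the free group on two generators a, b, let G be a group, and let π : F₂ → G be a group homomorphism. Define M₁ = {(x,y,z) ∈ F₂ × F₂ × F₂ : x = y and π(y) = π(z)}. Then for any w ∈ F₂ with w ≠ 1, the centralizer of (a,b,w) in F₂ × F₂ × F₂ has non-trivial intersection with M₁ if and only if π(w) has finite order in G. -/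
open Subgroup

/-- Distinct generators of a free group do not commute. -/
lemma FreeGroup.not_commute_of_ne {S : Type*} {s t : S} (h : s ≠ t) :
    ¬ Commute (FreeGroup.of s) (FreeGroup.of t) := by
  classical
  intro hc
  let f : S → Equiv.Perm (Fin 3) := fun x =>
    if x = s then Equiv.swap 0 1 else if x = t then Equiv.swap 1 2 else 1
  have hc' : Commute (FreeGroup.lift f (FreeGroup.of s)) (FreeGroup.lift f (FreeGroup.of t)) :=
    hc.map _
  rw [FreeGroup.lift_apply_of, FreeGroup.lift_apply_of] at hc'
  have hfs : f s = Equiv.swap 0 1 := if_pos rfl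
  have hft : f t = Equiv.swap 1 2 := by
    simp only [f]
    rw [if_neg h.symm]
    simp
  rw [hfs, hft] at hc'
  have h0 := congrArg (fun (e : Equiv.Perm (Fin 3)) => e 0) hc'
  simp only [Equiv.Perm.mul_apply] at h0
  simp [Equiv.swap_apply_def] at h0

lemma subsingleton_free_cyclic {T : Type*} [Subsingleton T] :
    ∃ u : FreeGroup T, ∀ g : FreeGroup T, g ∈ Subgroup.zpowers u := by
  by_cases h : Nonempty T
  · obtain ⟨t₀⟩ := h
    refine ⟨FreeGroup.of t₀, fun g => ?_⟩
    have hof : ∀ x : T, FreeGroup.of x ∈ Subgroup.zpowers (FreeGroup.of t₀) := by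
      intro x
      rw [Subsingleton.elim x t₀]
      exact Subgroup.mem_zpowers _
    refine FreeGroup.induction_on (C := fun g => g ∈ Subgroup.zpowers (FreeGroup.of t₀)) g
      (one_mem _) (fun x => hof x) (fun x _ => inv_mem (hof x))
      (fun x y hx hy => mul_mem hx hy)
  · refine ⟨1, fun g => ?_⟩
    have : g = 1 := by
      refine FreeGroup.induction_on (C := fun g => g = 1) g rfl
        (fun x => absurd ⟨x⟩ h) (fun x hx => by rw [hx]; simp)
        (fun x y hx hy => by rw [hx, hy, one_mul])
    rw [this]; exact one_mem _

lemma IsFreeGroup.toFreeGroup_of {G : Type*} [Group G] [IsFreeGroup G]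
    (a : Generators G) : toFreeGroup G (of a) = FreeGroup.of a := by
  simp only [toFreeGroup, of]
  exact (mulEquiv G).symm_apply_apply _

/-- Two commuting elements of a free group are powers of a common element. -/
lemma FreeGroup.commute_exists {ι : Type*} {z w : FreeGroup ι} (h : Commute z w) :
    ∃ (u : FreeGroup ι) (m n : ℤ), z = u ^ m ∧ w = u ^ n := by
  set H := Subgroup.closure ({z, w} : Set (FreeGroup ι)) with hH
  have hz : z ∈ H := Subgroup.subset_closure (by simp)
  have hw : w ∈ H := Subgroup.subset_closure (by simp)
  have hcomm : ∀ x y : H, Commute x y := by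
    rintro ⟨x, hx⟩ ⟨y, hy⟩
    have : Commute x y := by
      refine Subgroup.closure_induction₂
        (p := fun x y _ _ => Commute x y) ?_ ?_ ?_ ?_ ?_ ?_ ?_ hx hy
      · rintro x y (rfl | rfl) (rfl | rfl)
        · exact Commute.refl _
        · exact h
        · exact h.symm
        · exact Commute.refl _
      · exact fun x _ => Commute.one_left x
      · exact fun x _ => Commute.one_right x
      · exact fun x y z _ _ _ h1 h2 => h1.mul_left h2
      · exact fun y z x _ _ _ h1 h2 => h1.mul_right h2
      · exact fun x y _ _ h1 => h1.inv_left
      · exact fun x y _ _ h1 => h1.inv_right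
    exact Subtype.ext this
  haveI : Subsingleton (IsFreeGroup.Generators H) := by
    by_contra hns
    rw [not_subsingleton_iff_nontrivial] at hns
    obtain ⟨s, t, hst⟩ := hns
    have hc : Commute (IsFreeGroup.of s) (IsFreeGroup.of t) := hcomm _ _
    have hc2 : Commute ((IsFreeGroup.toFreeGroup H) (IsFreeGroup.of s))
        ((IsFreeGroup.toFreeGroup H) (IsFreeGroup.of t)) := hc.map _
    rw [IsFreeGroup.toFreeGroup_of, IsFreeGroup.toFreeGroup_of] at hc2
    exact FreeGroup.not_commute_of_ne hst hc2
  obtain ⟨u', hu'⟩ := subsingleton_free_cyclic (T := IsFreeGroup.Generators H)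
  set e := IsFreeGroup.toFreeGroup H
  set u : H := e.symm u'
  have key : ∀ g : H, ∃ m : ℤ, g = u ^ m := by
    intro g
    obtain ⟨m, hm⟩ := hu' (e g)
    exact ⟨m, by rw [← e.symm_apply_apply g, ← hm, map_zpow]⟩
  obtain ⟨m, hm⟩ := key ⟨z, hz⟩
  obtain ⟨n, hn⟩ := key ⟨w, hw⟩
  refine ⟨(u : FreeGroup ι), m, n, ?_, ?_⟩
  · have := congrArg (Subtype.val) hm
    simpa using this
  · have := congrArg (Subtype.val) hn
    simpa using this

/-- Free groups are torsion-free. -/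
lemma FreeGroup.pow_ne_one' {ι : Type*} {w : FreeGroup ι} (hw : w ≠ 1) {k : ℕ}
    (hk : 1 ≤ k) : w ^ k ≠ 1 := by
  intro hwk
  set H := Subgroup.zpowers w with hH
  have hwH : w ∈ H := Subgroup.mem_zpowers w
  have hfin : (Subgroup.zpowers w : Set (FreeGroup ι)).Finite := by
    have : IsOfFinOrder w := isOfFinOrder_iff_pow_eq_one.mpr ⟨k, hk, hwk⟩
    exact this.finite_zpowers
  haveI : Finite H := hfin
  set e := IsFreeGroup.toFreeGroup H
  haveI : Finite (FreeGroup (IsFreeGroup.Generators H)) := Finite.of_equiv H e.toEquiv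
  by_cases hne : Nonempty (IsFreeGroup.Generators H)
  · obtain ⟨t₀⟩ := hne
    set φ := FreeGroup.lift (fun _ : IsFreeGroup.Generators H => Multiplicative.ofAdd (1 : ℤ))
    have hinj : Function.Injective
        (fun n : ℤ => (FreeGroup.of t₀ : FreeGroup (IsFreeGroup.Generators H)) ^ n) := by
      intro a b hab
      have := congrArg φ hab
      simp only [map_zpow, FreeGroup.lift_apply_of, φ] at this
      have h2 := congrArg Multiplicative.toAdd this
      simpa using h2
    exact @not_finite ℤ _ (Finite.of_injective _ hinj)
  · have : ∀ g : FreeGroup (IsFreeGroup.Generators H), g = 1 := by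
      intro g
      refine FreeGroup.induction_on (C := fun g => g = 1) g rfl
        (fun x => absurd ⟨x⟩ hne) (fun x hx => by rw [hx]; simp)
        (fun x y hx hy => by rw [hx, hy, one_mul])
    have h1 : e ⟨w, hwH⟩ = e 1 := by rw [this (e ⟨w, hwH⟩)]; exact (MulEquiv.map_one e).symm
    have h2 : (⟨w, hwH⟩ : H) = 1 := e.injective h1
    exact hw (congrArg Subtype.val h2)

/-- An element commuting with a generator is a power of that generator. -/
lemma FreeGroup.eq_pow_of_commute_of {ι : Type*} {x : FreeGroup ι} {i : ι}
    (h : Commute x (FreeGroup.of i)) : ∃ p : ℤ, x = (FreeGroup.of i) ^ p := by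
  classical
  obtain ⟨u, m, n, hx, ha⟩ := FreeGroup.commute_exists h
  set φ := FreeGroup.lift (fun j : ι => Multiplicative.ofAdd (if j = i then (1 : ℤ) else 0))
  have hφa : φ (FreeGroup.of i) = Multiplicative.ofAdd (1 : ℤ) := by
    simp [φ]
  have h1 : n * (φ u).toAdd = 1 := by
    have := congrArg (fun g => Multiplicative.toAdd (φ g)) ha
    simpa [hφa, map_zpow, toAdd_zpow, mul_comm] using this.symm
  have hn : n = 1 ∨ n = -1 := Int.isUnit_iff.mp (IsUnit.of_mul_eq_one _ h1)
  rcases hn with rfl | rfl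
  · rw [zpow_one] at ha
    exact ⟨m, by rw [hx, ha]⟩
  · have hu : u = (FreeGroup.of i)⁻¹ := by
      rw [ha]; simp
    exact ⟨-m, by rw [hx, hu]; simp [zpow_neg, inv_zpow]⟩

/-- **Centralizers meeting `M₁(G)` detect torsion.**
Let `a, b` be the two generators of `F₂`, let `π : F₂ → G` be a group
homomorphism, and let `M₁ = {(x, y, z) : x = y ∧ π y = π z}`.  For any
`w ∈ F₂` with `w ≠ 1`, the centralizer of `(a, b, w)` in `F₂ × F₂ × F₂`
meets `M₁` non-trivially if and only if `π w` has finite order in `G`. -/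
theorem centralizer_meets_M1_iff_torsion {G : Type*} [Group G]
    (π : FreeGroup (Fin 2) →* G) (w : FreeGroup (Fin 2)) (hw : w ≠ 1) :
    (∃ p : FreeGroup (Fin 2) × FreeGroup (Fin 2) × FreeGroup (Fin 2),
        p ≠ 1 ∧
        p ∈ Subgroup.centralizer {(FreeGroup.of 0, FreeGroup.of 1, w)} ∧
        p.1 = p.2.1 ∧ π p.2.1 = π p.2.2) ↔
      ∃ k : ℕ, 1 ≤ k ∧ (π w) ^ k = 1 := by
  constructor
  · rintro ⟨⟨x, y, z⟩, hne, hcent, hxy, hπ⟩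
    simp only at hxy hπ
    have hc := Subgroup.mem_centralizer_iff.mp hcent _ (Set.mem_singleton _)
    simp only [Prod.mk_mul_mk, Prod.mk.injEq] at hc
    obtain ⟨h1, h2, h3⟩ := hc
    -- x commutes with a and (since x = y) with b, hence x = 1
    have hx1 : x = 1 := by
      obtain ⟨p, hp⟩ := FreeGroup.eq_pow_of_commute_of (h1.symm : Commute x (FreeGroup.of 0))
      have hyb : Commute x (FreeGroup.of 1) := by rw [hxy]; exact h2.symm
      obtain ⟨q, hq⟩ := FreeGroup.eq_pow_of_commute_of hyb
      set φ := FreeGroup.lift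
        (fun j : Fin 2 => Multiplicative.ofAdd (if j = 0 then (1 : ℤ) else 0))
      have e1 : Multiplicative.toAdd (φ x) = p := by
        rw [hp]; simp [φ, toAdd_zpow]
      have e2 : Multiplicative.toAdd (φ x) = 0 := by
        rw [hq]; simp [φ, toAdd_zpow]
      have hp0 : p = 0 := by rw [← e1, e2]
      rw [hp, hp0, zpow_zero]
    have hy1 : y = 1 := hxy ▸ hx1
    have hz : z ≠ 1 := by
      intro hz1
      exact hne (by rw [hx1, hy1, hz1]; rfl)
    have hπz : π z = 1 := by rw [← hπ, hy1, map_one]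
    -- w and z commute, so they are powers of a common element
    obtain ⟨u, m, n, hwu, hzu⟩ := FreeGroup.commute_exists (h3 : Commute w z)
    have hn : n ≠ 0 := by
      rintro rfl
      rw [zpow_zero] at hzu
      exact hz hzu
    have hπun : (π u) ^ n = 1 := by
      rw [← map_zpow, ← hzu, hπz]
    have hπuk : (π u) ^ (n.natAbs : ℤ) = 1 := by
      rcases Int.natAbs_eq n with h | h
      · rw [← h, hπun]
      · rw [← neg_neg (n.natAbs : ℤ), ← h, zpow_neg, hπun, inv_one]
    refine ⟨n.natAbs, Int.natAbs_pos.mpr hn, ?_⟩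
    rw [hwu, map_zpow, ← zpow_natCast, ← zpow_mul, mul_comm, zpow_mul, hπuk, one_zpow]
  · rintro ⟨k, hk, hπk⟩
    refine ⟨(1, 1, w ^ k), ?_, ?_, rfl, ?_⟩
    · intro h
      rw [Prod.ext_iff, Prod.ext_iff] at h
      exact FreeGroup.pow_ne_one' hw hk h.2.2
    · rw [Subgroup.mem_centralizer_iff]
      rintro g hg
      rw [Set.mem_singleton_iff] at hg
      subst hg
      simp only [Prod.mk_mul_mk, Prod.mk.injEq, one_mul, mul_one]
      exact ⟨trivial, trivial, ((Commute.refl w).pow_right k).eq⟩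
    · simp only [map_one, map_pow, hπk]
end

section
/- The conjugation action of SL₂(ℝ) preserves each component of the punctured cone {x² + yz = 0} ∖ {0}. Precisely: let A ∈ SL₂(ℝ) and let M be a nonzero 2×2 real matrix with Tr(M) = 0 and det(M) = 0. If the (1,2)-entry of M is strictly less than its (2,1)-entry, then the (1,2)-entry of A·M·A⁻¹ is strictly less than its (2,1)-entry. -/
/-!
For trace-zero `M = [[x, y], [z, -x]]` and `J₂ = [[0, 1], [-1, 0]]`, the matrix `M J₂` is the
symmetric matrix `[[-y, x], [x, z]]`, with determinant `det M` and trace `z - y`. On the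
component `y < z` it is therefore positive semidefinite with positive trace. Since
`adj(A) J₂ = J₂ Aᵀ`, conjugating `M` by `A ∈ SL₂(ℝ)` replaces `M J₂` by the congruent matrix
`A (M J₂) Aᵀ`, which is again positive semidefinite and nonzero, so its trace `z' - y'` is
positive.
-/

open Matrix

namespace Matrix

def J₂ (R : Type*) [Ring R] : Matrix (Fin 2) (Fin 2) R := !![0, 1; -1, 0]

section CommRing

variable {R : Type*} [CommRing R]

theorem trace_mul_J₂ (M : Matrix (Fin 2) (Fin 2) R) : (M * J₂ R).trace = M 1 0 - M 0 1 := by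
  simp [J₂, trace_fin_two, mul_apply, Fin.sum_univ_two]
  ring

theorem det_mul_J₂ (M : Matrix (Fin 2) (Fin 2) R) : (M * J₂ R).det = M.det := by
  simp [J₂]

theorem isSymm_mul_J₂ {M : Matrix (Fin 2) (Fin 2) R} (htr : M.trace = 0) :
    (M * J₂ R).IsSymm := by
  rw [trace_fin_two, add_eq_zero_iff_eq_neg] at htr
  ext i j
  fin_cases i <;> fin_cases j <;> simp [J₂, mul_apply, Fin.sum_univ_two, htr]

theorem adjugate_mul_J₂ (A : Matrix (Fin 2) (Fin 2) R) : A.adjugate * J₂ R = J₂ R * Aᵀ := by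
  ext i j
  fin_cases i <;> fin_cases j <;> simp [J₂, adjugate_fin_two, mul_apply, Fin.sum_univ_two]

end CommRing

theorem posSemidef_of_trace_pos_of_det_nonneg {S : Matrix (Fin 2) (Fin 2) ℝ}
    (hS : S.IsHermitian) (htr : 0 < S.trace) (hdet : 0 ≤ S.det) : S.PosSemidef := by
  refine .of_dotProduct_mulVec_nonneg hS fun v ↦ nonneg_of_mul_nonneg_right ?_ htr
  have hsymm : S 1 0 = S 0 1 := congr_fun₂ hS 0 1
  rw [trace_fin_two] at htr ⊢
  rw [det_fin_two] at hdet
  simp only [star_trivial, dotProduct, mulVec, Fin.sum_univ_two]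
  have hlagrange : (S 0 0 + S 1 1) * (v 0 * (S 0 0 * v 0 + S 0 1 * v 1)
      + v 1 * (S 1 0 * v 0 + S 1 1 * v 1)) = (S 0 0 * v 0 + S 0 1 * v 1) ^ 2
      + (S 0 1 * v 0 + S 1 1 * v 1) ^ 2 + (S 0 0 * S 1 1 - S 0 1 * S 1 0) * (v 0 ^ 2 + v 1 ^ 2) := by
    rw [hsymm]
    ring
  rw [hlagrange]
  positivity

theorem PosSemidef.trace_mul_mul_transpose_pos {n : Type*} [Fintype n] [DecidableEq n]
    {P : Matrix n n ℝ} (hP : P.PosSemidef) (hP0 : 0 < P.trace)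
    {A : Matrix n n ℝ} (hA : IsUnit A) : 0 < (A * P * Aᵀ).trace := by
  have hAPA : (A * P * Aᵀ).PosSemidef := by
    simpa using hP.mul_mul_conjTranspose_same A
  refine hAPA.trace_nonneg.lt_of_ne' fun h0 ↦ hP0.ne' (hP.trace_eq_zero_iff.mpr ?_)
  have hAt : IsUnit Aᵀ := (isUnit_transpose A).mpr hA
  have hzero := hAPA.trace_eq_zero_iff.mp h0
  rwa [hAt.mul_left_eq_zero, hA.mul_right_eq_zero] at hzero

end Matrix

theorem conjugation_preserves_cone_component_general
    (A : Matrix.SpecialLinearGroup (Fin 2) ℝ) (M : Matrix (Fin 2) (Fin 2) ℝ)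
    (htr : M.trace = 0) (hdet : M.det = 0)
    (h : M 0 1 < M 1 0) :
    (A.val * M * (A⁻¹).val) 0 1 < (A.val * M * (A⁻¹).val) 1 0 := by
  have hpos : 0 < (M * J₂ ℝ).trace := by
    rw [trace_mul_J₂]
    linarith
  have hpsd : (M * J₂ ℝ).PosSemidef :=
    posSemidef_of_trace_pos_of_det_nonneg (isHermitian_iff_isSymm.mpr (isSymm_mul_J₂ htr)) hpos
      (by rw [det_mul_J₂, hdet])
  have hconj : A.val * M * (A⁻¹).val * J₂ ℝ = A.val * (M * J₂ ℝ) * A.valᵀ := by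
    rw [show (A⁻¹).val = A.val.adjugate from Matrix.SpecialLinearGroup.coe_inv A,
      mul_assoc _ A.val.adjugate, adjugate_mul_J₂]
    simp only [mul_assoc]
  have hunit : IsUnit A.val := A.val.isUnit_iff_isUnit_det.mpr (by rw [A.prop]; exact isUnit_one)
  have htrace := hpsd.trace_mul_mul_transpose_pos hpos hunit
  rw [← hconj, trace_mul_J₂] at htrace
  linarith

/-- **Conjugation preserves each component of the punctured cone.**
Let `A ∈ SL₂(ℝ)` and let `M ≠ 0` be a real `2 × 2` matrix with zero trace and
zero determinant.  If the `(1,2)`-entry of `M` is strictly less than its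
`(2,1)`-entry, then the same holds for `A M A⁻¹`. -/
theorem conjugation_preserves_cone_component
    (A : Matrix.SpecialLinearGroup (Fin 2) ℝ) (M : Matrix (Fin 2) (Fin 2) ℝ)
    (hM : M ≠ 0) (htr : M.trace = 0) (hdet : M.det = 0)
    (h : M 0 1 < M 1 0) :
    (A.val * M * (A⁻¹).val) 0 1 < (A.val * M * (A⁻¹).val) 1 0 :=
  conjugation_preserves_cone_component_general A M htr hdet h
end

section
/- There exist matrices A, B ∈ SL₃(ℤ) generating a free group F of rank 2 (i.e. the homomorphism from the free group F₂ on two generators to SL₃(ℤ) sending the generators to A and B is injective, with image F), together with a ℚ-linear form f : ℚ³ → ℚ and a vector u ∈ ℚ³, such that for all g ∈ F: (1) f(g·u) ≥ 0, and (2) f(g·u) = 0 if and only if g = 1. -/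
private def Amat : Matrix.SpecialLinearGroup (Fin 3) ℤ :=
  ⟨!![841,348,144;696,289,120;144,60,25], by rw [Matrix.det_fin_three]; rfl⟩
private def Amat' : Matrix.SpecialLinearGroup (Fin 3) ℤ :=
  ⟨!![25,-60,144;-120,289,-696;144,-348,841], by rw [Matrix.det_fin_three]; rfl⟩
private def Bmat : Matrix.SpecialLinearGroup (Fin 3) ℤ :=
  ⟨!![25,60,144;120,289,696;144,348,841], by rw [Matrix.det_fin_three]; rfl⟩
private def Bmat' : Matrix.SpecialLinearGroup (Fin 3) ℤ :=
  ⟨!![841,-348,144;-696,289,-120;144,-60,25], by rw [Matrix.det_fin_three]; rfl⟩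

private lemma Amat_inv : Amat⁻¹ = Amat' := by
  rw [inv_eq_of_mul_eq_one_right]
  apply Subtype.ext
  show Amat.val * Amat'.val = 1
  rw [show (1 : Matrix (Fin 3) (Fin 3) ℤ) = !![1,0,0;0,1,0;0,0,1] from Matrix.one_fin_three]
  norm_num [Amat, Amat', Matrix.mul_fin_three]

private lemma Bmat_inv : Bmat⁻¹ = Bmat' := by
  rw [inv_eq_of_mul_eq_one_right]
  apply Subtype.ext
  show Bmat.val * Bmat'.val = 1
  rw [show (1 : Matrix (Fin 3) (Fin 3) ℤ) = !![1,0,0;0,1,0;0,0,1] from Matrix.one_fin_three]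
  norm_num [Bmat, Bmat', Matrix.mul_fin_three]

/-- the four cones -/
private def CM (z : Fin 2 → ℚ) : Prop :=
  (0 < -2*z 0+5*z 1 ∧ 0 < z 0-2*z 1) ∨ (-2*z 0+5*z 1 < 0 ∧ z 0-2*z 1 < 0)
private def CMi (z : Fin 2 → ℚ) : Prop :=
  (0 < -5*z 0-2*z 1 ∧ 0 < 2*z 0+z 1) ∨ (-5*z 0-2*z 1 < 0 ∧ 2*z 0+z 1 < 0)
private def CN (z : Fin 2 → ℚ) : Prop :=
  (0 < -2*z 0+z 1 ∧ 0 < 5*z 0-2*z 1) ∨ (-2*z 0+z 1 < 0 ∧ 5*z 0-2*z 1 < 0)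
private def CNi (z : Fin 2 → ℚ) : Prop :=
  (0 < z 0+2*z 1 ∧ 0 < -2*z 0-5*z 1) ∨ (z 0+2*z 1 < 0 ∧ -2*z 0-5*z 1 < 0)

private def lcond : Fin 2 × Bool → (Fin 2 → ℚ) → Prop := fun a z =>
  if a.1 = 0 then (if a.2 then CM z else CMi z) else (if a.2 then CN z else CNi z)

private lemma cond_sum {a : Fin 2 × Bool} {z : Fin 2 → ℚ} (h : lcond a z) : z 0 + z 1 ≠ 0 := by
  obtain ⟨i, b⟩ := a
  fin_cases i <;> cases b <;>
    simp only [lcond, if_true, if_false, reduceIte] at h <;>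
    rcases h with ⟨h1, h2⟩ | ⟨h1, h2⟩ <;>
    first
      | (intro hc; rw [CM] at *; linarith)
      | (intro hc; rw [CMi] at *; linarith)
      | (intro hc; rw [CN] at *; linarith)
      | (intro hc; rw [CNi] at *; linarith)
      | (intro hc; linarith)

private def Ver (z : Fin 2 → ℚ) : Fin 3 → ℚ := ![z 0^2, 2*z 0*z 1, z 1^2]

private def vecOf (w : FreeGroup (Fin 2)) : Fin 3 → ℚ :=
  (((FreeGroup.lift ![Amat, Bmat] w : Matrix.SpecialLinearGroup (Fin 3) ℤ)).val.map
    ((↑) : ℤ → ℚ)).mulVec ![1,-2,1]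

private def tm (a : Fin 2 × Bool) : Matrix (Fin 3) (Fin 3) ℚ :=
  ((FreeGroup.lift ![Amat, Bmat] (FreeGroup.mk [a]) :
    Matrix.SpecialLinearGroup (Fin 3) ℤ)).val.map ((↑) : ℤ → ℚ)

private lemma vec_cons (a : Fin 2 × Bool) (L : List (Fin 2 × Bool)) :
    vecOf (FreeGroup.mk (a :: L)) = (tm a).mulVec (vecOf (FreeGroup.mk L)) := by
  unfold vecOf tm
  rw [show (a :: L) = [a] ++ L from rfl, ← FreeGroup.mul_mk, _root_.map_mul]
  rw [show ((FreeGroup.lift ![Amat, Bmat] (FreeGroup.mk [a]) *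
      FreeGroup.lift ![Amat, Bmat] (FreeGroup.mk L)).val)
    = (FreeGroup.lift ![Amat, Bmat] (FreeGroup.mk [a])).val *
      (FreeGroup.lift ![Amat, Bmat] (FreeGroup.mk L)).val from rfl]
  have h : ((↑) : ℤ → ℚ) = ⇑(Int.castRingHom ℚ) := rfl
  rw [h, Matrix.map_mul, ← Matrix.mulVec_mulVec]

private lemma tm_At : tm ((0 : Fin 2), true) = Amat.val.map ((↑) : ℤ → ℚ) := by
  unfold tm
  rw [show FreeGroup.mk [((0 : Fin 2), true)] = FreeGroup.of (0 : Fin 2) from rfl,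
    FreeGroup.lift_apply_of]
  rfl

private lemma tm_Af : tm ((0 : Fin 2), false) = Amat'.val.map ((↑) : ℤ → ℚ) := by
  unfold tm
  have h1 : FreeGroup.mk [((0 : Fin 2), false)] = (FreeGroup.of (0 : Fin 2))⁻¹ := by
    rw [show FreeGroup.of (0 : Fin 2) = FreeGroup.mk [((0:Fin 2),true)] from rfl,
      FreeGroup.inv_mk]
    simp [FreeGroup.invRev]
  rw [h1, _root_.map_inv, FreeGroup.lift_apply_of]
  show ((![Amat, Bmat] (0 : Fin 2))⁻¹).val.map _ = _
  rw [show ![Amat, Bmat] (0 : Fin 2) = Amat from rfl, Amat_inv]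

private lemma tm_Bt : tm ((1 : Fin 2), true) = Bmat.val.map ((↑) : ℤ → ℚ) := by
  unfold tm
  rw [show FreeGroup.mk [((1 : Fin 2), true)] = FreeGroup.of (1 : Fin 2) from rfl,
    FreeGroup.lift_apply_of]
  rfl

private lemma tm_Bf : tm ((1 : Fin 2), false) = Bmat'.val.map ((↑) : ℤ → ℚ) := by
  unfold tm
  have h1 : FreeGroup.mk [((1 : Fin 2), false)] = (FreeGroup.of (1 : Fin 2))⁻¹ := by
    rw [show FreeGroup.of (1 : Fin 2) = FreeGroup.mk [((1:Fin 2),true)] from rfl,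
      FreeGroup.inv_mk]
    simp [FreeGroup.invRev]
  rw [h1, _root_.map_inv, FreeGroup.lift_apply_of]
  show ((![Amat, Bmat] (1 : Fin 2))⁻¹).val.map _ = _
  rw [show ![Amat, Bmat] (1 : Fin 2) = Bmat from rfl, Bmat_inv]

private lemma step_At (z : Fin 2 → ℚ) :
    (Amat.val.map ((↑) : ℤ → ℚ)).mulVec (Ver z) = Ver ![29*z 0+12*z 1, 12*z 0+5*z 1] := by
  funext i
  fin_cases i <;>
    simp [Amat, Ver, Matrix.mulVec, dotProduct, Fin.sum_univ_three, Matrix.map_apply] <;>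
    ring

private lemma step_Af (z : Fin 2 → ℚ) :
    (Amat'.val.map ((↑) : ℤ → ℚ)).mulVec (Ver z) = Ver ![5*z 0-12*z 1, -12*z 0+29*z 1] := by
  funext i
  fin_cases i <;>
    simp [Amat', Ver, Matrix.mulVec, dotProduct, Fin.sum_univ_three, Matrix.map_apply] <;>
    ring

private lemma step_Bt (z : Fin 2 → ℚ) :
    (Bmat.val.map ((↑) : ℤ → ℚ)).mulVec (Ver z) = Ver ![5*z 0+12*z 1, 12*z 0+29*z 1] := by
  funext i
  fin_cases i <;>
    simp [Bmat, Ver, Matrix.mulVec, dotProduct, Fin.sum_univ_three, Matrix.map_apply] <;>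
    ring

private lemma step_Bf (z : Fin 2 → ℚ) :
    (Bmat'.val.map ((↑) : ℤ → ℚ)).mulVec (Ver z) = Ver ![29*z 0-12*z 1, -12*z 0+5*z 1] := by
  funext i
  fin_cases i <;>
    simp [Bmat', Ver, Matrix.mulVec, dotProduct, Fin.sum_univ_three, Matrix.map_apply] <;>
    ring

private lemma reduce_cons_cons {α} [DecidableEq α] {a b : (α × Bool)} {L : List (α × Bool)}
    (h : FreeGroup.reduce (a :: b :: L) = a :: b :: L) :
    FreeGroup.reduce (b :: L) = b :: L ∧ ¬(a.1 = b.1 ∧ a.2 = !b.2) := by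
  have hred := FreeGroup.reduce.red (L := b :: L)
  have hlen : (FreeGroup.reduce (b :: L)).length ≤ (b :: L).length := hred.length_le
  rw [FreeGroup.reduce.cons] at h
  rcases hR : FreeGroup.reduce (b :: L) with _ | ⟨c, cs⟩
  · rw [hR] at h; simp at h
  · rw [hR] at h
    have h' : (if a.1 = c.1 ∧ a.2 = !c.2 then cs else a :: c :: cs) = a :: b :: L := h
    by_cases hc : a.1 = c.1 ∧ a.2 = !c.2
    · rw [if_pos hc] at h'
      exfalso
      have := congrArg List.length h'
      rw [hR] at hlen
      simp at this hlen
      omega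
    · rw [if_neg hc] at h'
      obtain ⟨-, h2, h3⟩ : a = a ∧ c = b ∧ cs = L := by simpa using h'
      subst h2; subst h3; exact ⟨rfl, hc⟩

private lemma vec_nil : vecOf (FreeGroup.mk ([] : List (Fin 2 × Bool))) = Ver ![1,-1] := by
  unfold vecOf
  rw [show FreeGroup.mk ([] : List (Fin 2 × Bool)) = 1 from rfl, _root_.map_one]
  rw [show ((1 : Matrix.SpecialLinearGroup (Fin 3) ℤ)).val = (1 : Matrix (Fin 3) (Fin 3) ℤ) from rfl]
  rw [Matrix.map_one _ (by norm_num) (by norm_num), Matrix.one_mulVec]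
  funext i
  fin_cases i <;> norm_num [Ver]


private lemma cons_step (a b : Fin 2 × Bool) (hnc : ¬(a.1 = b.1 ∧ a.2 = !b.2))
    (z : Fin 2 → ℚ) (hcz : lcond b z) :
    ∃ z', (tm a).mulVec (Ver z) = Ver z' ∧ lcond a z' := by
  obtain ⟨ia, ba⟩ := a
  obtain ⟨ib, bb⟩ := b
  have h2cases : ∀ j : Fin 2, j ≠ 0 → j = 1 := by decide
  rcases eq_or_ne ia 0 with hia | hia
  · subst hia
    rcases eq_or_ne ib 0 with hib | hib
    · subst hib
      cases ba <;> cases bb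
      · refine ⟨![5*z 0-12*z 1, -12*z 0+29*z 1], ?_, ?_⟩
        · rw [tm_Af, step_Af]
        · simp only [lcond, CM, CMi, CN, CNi, Matrix.cons_val_zero, Matrix.cons_val_one,
            Matrix.head_cons, Fin.isValue] at hcz ⊢
          norm_num at hcz ⊢
          rcases hcz with ⟨h1, h2⟩ | ⟨h1, h2⟩ <;>
            first
              | (left; constructor <;> linarith)
              | (right; constructor <;> linarith)
      · exact absurd ⟨rfl, rfl⟩ hnc
      · exact absurd ⟨rfl, rfl⟩ hnc
      · refine ⟨![29*z 0+12*z 1, 12*z 0+5*z 1], ?_, ?_⟩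
        · rw [tm_At, step_At]
        · simp only [lcond, CM, CMi, CN, CNi, Matrix.cons_val_zero, Matrix.cons_val_one,
            Matrix.head_cons, Fin.isValue] at hcz ⊢
          norm_num at hcz ⊢
          rcases hcz with ⟨h1, h2⟩ | ⟨h1, h2⟩ <;>
            first
              | (left; constructor <;> linarith)
              | (right; constructor <;> linarith)
    · have hib1 := h2cases ib hib; subst hib1
      cases ba <;> cases bb
      · refine ⟨![5*z 0-12*z 1, -12*z 0+29*z 1], ?_, ?_⟩
        · rw [tm_Af, step_Af]
        · simp only [lcond, CM, CMi, CN, CNi, Matrix.cons_val_zero, Matrix.cons_val_one,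
            Matrix.head_cons, Fin.isValue] at hcz ⊢
          norm_num at hcz ⊢
          rcases hcz with ⟨h1, h2⟩ | ⟨h1, h2⟩ <;>
            first
              | (left; constructor <;> linarith)
              | (right; constructor <;> linarith)
      · refine ⟨![5*z 0-12*z 1, -12*z 0+29*z 1], ?_, ?_⟩
        · rw [tm_Af, step_Af]
        · simp only [lcond, CM, CMi, CN, CNi, Matrix.cons_val_zero, Matrix.cons_val_one,
            Matrix.head_cons, Fin.isValue] at hcz ⊢
          norm_num at hcz ⊢
          rcases hcz with ⟨h1, h2⟩ | ⟨h1, h2⟩ <;>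
            first
              | (left; constructor <;> linarith)
              | (right; constructor <;> linarith)
      · refine ⟨![29*z 0+12*z 1, 12*z 0+5*z 1], ?_, ?_⟩
        · rw [tm_At, step_At]
        · simp only [lcond, CM, CMi, CN, CNi, Matrix.cons_val_zero, Matrix.cons_val_one,
            Matrix.head_cons, Fin.isValue] at hcz ⊢
          norm_num at hcz ⊢
          rcases hcz with ⟨h1, h2⟩ | ⟨h1, h2⟩ <;>
            first
              | (left; constructor <;> linarith)
              | (right; constructor <;> linarith)
      · refine ⟨![29*z 0+12*z 1, 12*z 0+5*z 1], ?_, ?_⟩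
        · rw [tm_At, step_At]
        · simp only [lcond, CM, CMi, CN, CNi, Matrix.cons_val_zero, Matrix.cons_val_one,
            Matrix.head_cons, Fin.isValue] at hcz ⊢
          norm_num at hcz ⊢
          rcases hcz with ⟨h1, h2⟩ | ⟨h1, h2⟩ <;>
            first
              | (left; constructor <;> linarith)
              | (right; constructor <;> linarith)
  · have hia1 := h2cases ia hia; subst hia1
    rcases eq_or_ne ib 0 with hib | hib
    · subst hib
      cases ba <;> cases bb
      · refine ⟨![29*z 0-12*z 1, -12*z 0+5*z 1], ?_, ?_⟩
        · rw [tm_Bf, step_Bf]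
        · simp only [lcond, CM, CMi, CN, CNi, Matrix.cons_val_zero, Matrix.cons_val_one,
            Matrix.head_cons, Fin.isValue] at hcz ⊢
          norm_num at hcz ⊢
          rcases hcz with ⟨h1, h2⟩ | ⟨h1, h2⟩ <;>
            first
              | (left; constructor <;> linarith)
              | (right; constructor <;> linarith)
      · refine ⟨![29*z 0-12*z 1, -12*z 0+5*z 1], ?_, ?_⟩
        · rw [tm_Bf, step_Bf]
        · simp only [lcond, CM, CMi, CN, CNi, Matrix.cons_val_zero, Matrix.cons_val_one,
            Matrix.head_cons, Fin.isValue] at hcz ⊢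
          norm_num at hcz ⊢
          rcases hcz with ⟨h1, h2⟩ | ⟨h1, h2⟩ <;>
            first
              | (left; constructor <;> linarith)
              | (right; constructor <;> linarith)
      · refine ⟨![5*z 0+12*z 1, 12*z 0+29*z 1], ?_, ?_⟩
        · rw [tm_Bt, step_Bt]
        · simp only [lcond, CM, CMi, CN, CNi, Matrix.cons_val_zero, Matrix.cons_val_one,
            Matrix.head_cons, Fin.isValue] at hcz ⊢
          norm_num at hcz ⊢
          rcases hcz with ⟨h1, h2⟩ | ⟨h1, h2⟩ <;>
            first
              | (left; constructor <;> linarith)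
              | (right; constructor <;> linarith)
      · refine ⟨![5*z 0+12*z 1, 12*z 0+29*z 1], ?_, ?_⟩
        · rw [tm_Bt, step_Bt]
        · simp only [lcond, CM, CMi, CN, CNi, Matrix.cons_val_zero, Matrix.cons_val_one,
            Matrix.head_cons, Fin.isValue] at hcz ⊢
          norm_num at hcz ⊢
          rcases hcz with ⟨h1, h2⟩ | ⟨h1, h2⟩ <;>
            first
              | (left; constructor <;> linarith)
              | (right; constructor <;> linarith)
    · have hib1 := h2cases ib hib; subst hib1
      cases ba <;> cases bb
      · refine ⟨![29*z 0-12*z 1, -12*z 0+5*z 1], ?_, ?_⟩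
        · rw [tm_Bf, step_Bf]
        · simp only [lcond, CM, CMi, CN, CNi, Matrix.cons_val_zero, Matrix.cons_val_one,
            Matrix.head_cons, Fin.isValue] at hcz ⊢
          norm_num at hcz ⊢
          rcases hcz with ⟨h1, h2⟩ | ⟨h1, h2⟩ <;>
            first
              | (left; constructor <;> linarith)
              | (right; constructor <;> linarith)
      · exact absurd ⟨rfl, rfl⟩ hnc
      · exact absurd ⟨rfl, rfl⟩ hnc
      · refine ⟨![5*z 0+12*z 1, 12*z 0+29*z 1], ?_, ?_⟩
        · rw [tm_Bt, step_Bt]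
        · simp only [lcond, CM, CMi, CN, CNi, Matrix.cons_val_zero, Matrix.cons_val_one,
            Matrix.head_cons, Fin.isValue] at hcz ⊢
          norm_num at hcz ⊢
          rcases hcz with ⟨h1, h2⟩ | ⟨h1, h2⟩ <;>
            first
              | (left; constructor <;> linarith)
              | (right; constructor <;> linarith)

private lemma key (L : List (Fin 2 × Bool)) :
    ∀ a : Fin 2 × Bool, FreeGroup.reduce (a :: L) = a :: L →
      ∃ z : Fin 2 → ℚ, vecOf (FreeGroup.mk (a :: L)) = Ver z ∧ lcond a z := by
  induction L with
  | nil =>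
    rintro ⟨ia, ba⟩ -
    rw [show FreeGroup.mk [(ia,ba)] = FreeGroup.mk ((ia,ba) :: []) from rfl, vec_cons, vec_nil]
    have h2cases : ∀ j : Fin 2, j ≠ 0 → j = 1 := by decide
    rcases eq_or_ne ia 0 with hia | hia
    · subst hia
      cases ba
      · refine ⟨![(17:ℚ),-41], ?_, ?_⟩
        · rw [tm_Af, step_Af]
          funext i; fin_cases i <;> norm_num [Ver]
        · simp only [lcond, CM, CMi, CN, CNi, Matrix.cons_val_zero, Matrix.cons_val_one,
            Matrix.head_cons, Fin.isValue]
          norm_num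
      · refine ⟨![(17:ℚ),7], ?_, ?_⟩
        · rw [tm_At, step_At]
          funext i; fin_cases i <;> norm_num [Ver]
        · simp only [lcond, CM, CMi, CN, CNi, Matrix.cons_val_zero, Matrix.cons_val_one,
            Matrix.head_cons, Fin.isValue]
          norm_num
    · have hia1 := h2cases ia hia; subst hia1
      cases ba
      · refine ⟨![(41:ℚ),-17], ?_, ?_⟩
        · rw [tm_Bf, step_Bf]
          funext i; fin_cases i <;> norm_num [Ver]
        · simp only [lcond, CM, CMi, CN, CNi, Matrix.cons_val_zero, Matrix.cons_val_one,
            Matrix.head_cons, Fin.isValue]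
          norm_num
      · refine ⟨![(-7:ℚ),-17], ?_, ?_⟩
        · rw [tm_Bt, step_Bt]
          funext i; fin_cases i <;> norm_num [Ver]
        · simp only [lcond, CM, CMi, CN, CNi, Matrix.cons_val_zero, Matrix.cons_val_one,
            Matrix.head_cons, Fin.isValue]
          norm_num
  | cons b L ih =>
    rintro a h
    obtain ⟨hred, hnc⟩ := reduce_cons_cons h
    obtain ⟨z, hz, hcz⟩ := ih b hred
    rw [vec_cons, hz]
    exact cons_step a b hnc z hcz

private lemma vec_one : vecOf 1 = Ver ![1,-1] := by
  rw [show (1 : FreeGroup (Fin 2)) = FreeGroup.mk [] from rfl]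
  exact vec_nil

private lemma main_pos (w : FreeGroup (Fin 2)) (hw : w ≠ 1) :
    0 < vecOf w 0 + vecOf w 1 + vecOf w 2 := by
  have hL : w.toWord ≠ [] := fun h => hw (FreeGroup.toWord_eq_nil_iff.mp h)
  rcases hLL : w.toWord with _ | ⟨a, L⟩
  · exact absurd hLL hL
  · have hred : FreeGroup.reduce (a :: L) = a :: L := by
      rw [← hLL]; exact FreeGroup.reduce_toWord w
    obtain ⟨z, hz, hcz⟩ := key L a hred
    have hmk : FreeGroup.mk (a :: L) = w := by rw [← hLL]; exact FreeGroup.mk_toWord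
    rw [hmk] at hz
    rw [hz]
    have hzs : z 0 + z 1 ≠ 0 := cond_sum hcz
    have hsum : Ver z 0 + Ver z 1 + Ver z 2 = (z 0 + z 1)^2 := by
      simp [Ver]; ring
    rw [hsum]
    positivity


/-- **A free subgroup of `SL₃(ℤ)` and a positive linear form on an orbit.**
There exist `A, B ∈ SL₃(ℤ)` generating a free group `F` of rank 2, a
`ℚ`-linear form `f : ℚ³ → ℚ` and a vector `u ∈ ℚ³` such that for all
`g ∈ F`: (1) `f (g • u) ≥ 0`, and (2) `f (g • u) = 0` iff `g = 1`. -/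
theorem exists_free_subgroup_SL3Z_with_linear_form :
    ∃ (A B : Matrix.SpecialLinearGroup (Fin 3) ℤ)
      (f : (Fin 3 → ℚ) →ₗ[ℚ] ℚ) (u : Fin 3 → ℚ),
      Function.Injective
          (FreeGroup.lift ![A, B] :
            FreeGroup (Fin 2) →* Matrix.SpecialLinearGroup (Fin 3) ℤ) ∧
        ∀ g ∈ (FreeGroup.lift ![A, B] :
            FreeGroup (Fin 2) →* Matrix.SpecialLinearGroup (Fin 3) ℤ).range,
          0 ≤ f ((g.val.map ((↑) : ℤ → ℚ)).mulVec u) ∧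
            (f ((g.val.map ((↑) : ℤ → ℚ)).mulVec u) = 0 ↔ g = 1) := by
  refine ⟨Amat, Bmat,
    (LinearMap.proj 0 : (Fin 3 → ℚ) →ₗ[ℚ] ℚ) + LinearMap.proj 1 + LinearMap.proj 2,
    ![1,-2,1], ?_, ?_⟩
  · rw [injective_iff_map_eq_one]
    intro w hw1
    by_contra hne
    have hpos := main_pos w hne
    have hv : vecOf w = vecOf 1 := by unfold vecOf; rw [hw1, _root_.map_one]
    rw [hv, vec_one] at hpos
    norm_num [Ver, Matrix.cons_val_two, Matrix.tail_cons, Matrix.head_cons] at hpos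
  · rintro g ⟨w, rfl⟩
    have hexpr : (((FreeGroup.lift ![Amat, Bmat]) w).val.map ((↑) : ℤ → ℚ)).mulVec ![1,-2,1]
        = vecOf w := rfl
    rw [hexpr]
    simp only [LinearMap.add_apply, LinearMap.proj_apply]
    by_cases h1 : (FreeGroup.lift ![Amat, Bmat]) w = 1
    · have hv : vecOf w = vecOf 1 := by unfold vecOf; rw [h1, _root_.map_one]
      rw [hv, vec_one]
      norm_num [Ver, Matrix.cons_val_two, Matrix.tail_cons, Matrix.head_cons]
      exact h1
    · have hw : w ≠ 1 := fun h => h1 (by rw [h, _root_.map_one])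
      have hpos := main_pos w hw
      refine ⟨le_of_lt hpos, ?_, ?_⟩
      · intro h0; exact absurd h0 (ne_of_gt hpos)
      · intro hg1; exact absurd hg1 h1
end

section
/- Let Γ be a subgroup of SL₂(ℤ) which is a free group and in which every non-identity element is hyperbolic (|Tr| > 2), and let A ∈ Γ with A ≠ 1. Let M_A be a nonzero 2×2 real trace-zero matrix with A·M_A·A⁻¹ = λ·M_A for some real λ ≠ 1. Then for every g ∈ Γ: there exists a real number μ with g·M_A·g⁻¹ = μ·M_A if and only if g commutes with A. Moreover, the centralizer of A in Γ is cyclic: there exists M ∈ Γ with C_Γ(A) = ⟨M⟩. -/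
open Matrix MatrixGroups

section Aux

lemma aux_prop (p q r x y z : ℝ) (h1 : p^2 + q*r = 0) (h2 : x^2 + y*z = 0)
    (h3 : 2*p*x + q*z + r*y = 0) (h0 : ¬(p = 0 ∧ q = 0 ∧ r = 0)) :
    ∃ μ : ℝ, x = μ * p ∧ y = μ * q ∧ z = μ * r := by
  have e1 : q*x - p*y = 0 := by
    have : (q*x - p*y)^2 = 0 := by linear_combination q^2*h2 + y^2*h1 - q*y*h3
    exact pow_eq_zero_iff (by norm_num) |>.mp this
  have e2 : r*x - p*z = 0 := by
    have : (r*x - p*z)^2 = 0 := by linear_combination r^2*h2 + z^2*h1 - r*z*h3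
    exact pow_eq_zero_iff (by norm_num) |>.mp this
  have e3 : q*z - r*y = 0 := by
    have : (q*z - r*y)^2 = 0 := by
      linear_combination (q*z+r*y-2*p*x)*h3 - 4*y*z*h1 + 4*p^2*h2
    exact pow_eq_zero_iff (by norm_num) |>.mp this
  by_cases hp : p ≠ 0
  · refine ⟨x/p, by field_simp, ?_, ?_⟩
    · field_simp; linear_combination -e1
    · field_simp; linear_combination -e2
  push_neg at hp
  by_cases hq : q ≠ 0
  · refine ⟨y/q, ?_, by field_simp, ?_⟩
    · field_simp; linear_combination e1
    · field_simp; linear_combination e3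
  push_neg at hq
  have hr : r ≠ 0 := fun hr => h0 ⟨hp, hq, hr⟩
  refine ⟨z/r, ?_, ?_, by field_simp⟩
  · field_simp; linear_combination e2
  · field_simp; linear_combination -e3

lemma aux_comm (e f g h p q r : ℝ) (hdet : e*h - f*g = 1) (h1 : p^2 + q*r = 0)
    (h0 : ¬(p = 0 ∧ q = 0 ∧ r = 0))
    (c1 : f*r = q*g) (c2 : q*(e-h) = 2*p*f) (c3 : 2*p*g = r*(e-h)) :
    (e+h)^2 = 4 := by
  have key : (e-h)^2 + 4*f*g = 0 := by
    by_cases hq : q ≠ 0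
    · have h4 : q^2*((e-h)^2 + 4*f*g) = 0 := by
        linear_combination (q*(e-h)+2*p*f)*c2 - 4*q*f*c1 + 4*f^2*h1
      exact (mul_eq_zero.mp h4).resolve_left (pow_ne_zero 2 hq)
    push_neg at hq
    by_cases hr : r ≠ 0
    · have h4 : r^2*((e-h)^2 + 4*f*g) = 0 := by
        linear_combination -(r*(e-h)+2*p*g)*c3 + 4*r*g*c1 + 4*g^2*h1
      exact (mul_eq_zero.mp h4).resolve_left (pow_ne_zero 2 hr)
    push_neg at hr
    have hp : p = 0 := by
      have : p^2 = 0 := by rw [hq] at h1; linarith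
      exact pow_eq_zero_iff (by norm_num) |>.mp this
    exact absurd ⟨hp, hq, hr⟩ h0
  linear_combination key + 4*hdet

/-- A commutative free group is cyclic. -/
lemma aux_cyclic (G : Type*) [Group G] [IsFreeGroup G]
    (hc : ∀ a b : G, a * b = b * a) : ∃ m : G, ∀ x : G, ∃ n : ℤ, x = m ^ n := by
  have hsub : Subsingleton (IsFreeGroup.Generators G) := by
    by_contra hns
    rw [not_subsingleton_iff_nontrivial] at hns
    obtain ⟨a, b, hab⟩ := hns
    classical
    set f : IsFreeGroup.Generators G → Equiv.Perm (Fin 3) :=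
      fun s => if s = a then Equiv.swap 0 1 else Equiv.swap 1 2 with hf
    have h1 : IsFreeGroup.lift f (IsFreeGroup.of a) = Equiv.swap 0 1 := by
      rw [IsFreeGroup.lift_of, hf]; simp
    have h2 : IsFreeGroup.lift f (IsFreeGroup.of b) = Equiv.swap 1 2 := by
      rw [IsFreeGroup.lift_of, hf]; simp [hab.symm]
    have := hc (IsFreeGroup.of a) (IsFreeGroup.of b)
    have : (Equiv.swap 0 1 : Equiv.Perm (Fin 3)) * Equiv.swap 1 2
        = Equiv.swap 1 2 * Equiv.swap 0 1 := by
      rw [← h1, ← h2, ← _root_.map_mul, ← _root_.map_mul, this]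
    exact absurd this (by decide)
  set e := IsFreeGroup.toFreeGroup G with he
  rcases isEmpty_or_nonempty (IsFreeGroup.Generators G) with hE | hN
  · refine ⟨1, fun x => ⟨0, ?_⟩⟩
    have : ∀ y : FreeGroup (IsFreeGroup.Generators G), y = 1 := by
      intro y
      induction y using FreeGroup.induction_on with
      | C1 => rfl
      | of s => exact hE.elim s
      | inv_of s ih => rw [ih, inv_one]
      | mul u v hu hv => rw [hu, hv, one_mul]
    have := this (e x)
    have := congrArg e.symm this
    simpa using this
  · obtain ⟨a⟩ := hN
    refine ⟨e.symm (FreeGroup.of a), fun x => ?_⟩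
    have : ∀ y : FreeGroup (IsFreeGroup.Generators G), ∃ n : ℤ, y = (FreeGroup.of a) ^ n := by
      intro y
      induction y using FreeGroup.induction_on with
      | C1 => exact ⟨0, by simp⟩
      | of s => exact ⟨1, by rw [Subsingleton.elim s a]; rfl⟩
      | inv_of s ih => obtain ⟨n, hn⟩ := ih; exact ⟨-n, by rw [hn, ← _root_.zpow_neg]⟩
      | mul u v hu hv =>
          obtain ⟨n, hn⟩ := hu; obtain ⟨m, hm⟩ := hv
          exact ⟨n + m, by rw [hn, hm, ← _root_.zpow_add]⟩
    obtain ⟨n, hn⟩ := this (e x)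
    refine ⟨n, ?_⟩
    have := congrArg e.symm hn
    simpa [map_zpow] using this

end Aux

/-- **Fixing the eigenline characterizes the centralizer, which is cyclic.**
Let `Γ ≤ SL₂(ℤ)` be free with all non-identity elements hyperbolic, let
`A ∈ Γ`, `A ≠ 1`, and let `M_A ≠ 0` be a real trace-zero matrix with
`A M_A A⁻¹ = λ M_A` for some `λ ≠ 1`.  Then `g ∈ Γ` maps `M_A` to a scalar
multiple of itself under conjugation iff `g` commutes with `A`; moreover the
centralizer of `A` in `Γ` is cyclic. -/
theorem centralizer_eq_line_stabilizer_and_cyclic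
    (Γ : Subgroup (Matrix.SpecialLinearGroup (Fin 2) ℤ)) [IsFreeGroup Γ]
    (hhyp : ∀ g ∈ Γ, g ≠ 1 → 2 < |Matrix.trace (g : Matrix (Fin 2) (Fin 2) ℤ)|)
    (A : Matrix.SpecialLinearGroup (Fin 2) ℤ) (hAΓ : A ∈ Γ) (hA1 : A ≠ 1)
    (MA : Matrix (Fin 2) (Fin 2) ℝ) (hMA0 : MA ≠ 0) (hMAtr : MA.trace = 0)
    (lam : ℝ) (hlam : lam ≠ 1)
    (hMA : (A.val.map ((↑) : ℤ → ℝ)) * MA * ((A⁻¹).val.map ((↑) : ℤ → ℝ)) =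
      lam • MA) :
    (∀ g ∈ Γ,
      ((∃ mu : ℝ,
          (g.val.map ((↑) : ℤ → ℝ)) * MA * ((g⁻¹).val.map ((↑) : ℤ → ℝ)) =
            mu • MA) ↔ Commute g A)) ∧
    ∃ M ∈ Γ, ∀ g : Matrix.SpecialLinearGroup (Fin 2) ℤ,
      (g ∈ Γ ∧ Commute g A) ↔ g ∈ Subgroup.zpowers M := by
  classical
  set p : ℝ := MA 0 0 with hp
  set q : ℝ := MA 0 1 with hq
  set r : ℝ := MA 1 0 with hr
  have hm11 : MA 1 1 = -p := by
    have := hMAtr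
    rw [Matrix.trace_fin_two] at this
    rw [← hp] at this
    linarith
  have h0 : ¬(p = 0 ∧ q = 0 ∧ r = 0) := by
    rintro ⟨h1, h2, h3⟩
    apply hMA0
    have h4 : MA 1 1 = 0 := by rw [hm11, h1, neg_zero]
    ext i j
    fin_cases i <;> fin_cases j <;> simp only [Matrix.zero_apply] <;>
      first
        | exact h1
        | exact h2
        | exact h3
        | exact h4
  set φ : Matrix.SpecialLinearGroup (Fin 2) ℤ → Matrix (Fin 2) (Fin 2) ℝ :=
    fun S => S.val.map ((↑) : ℤ → ℝ) with hφ
  have hmul : ∀ S T, φ (S * T) = φ S * φ T := by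
    intro S T
    ext i j
    simp [hφ, Matrix.map_apply, Matrix.mul_apply, Fin.sum_univ_two]
  have hone : φ 1 = 1 := by
    ext i j
    fin_cases i <;> fin_cases j <;> simp [hφ, Matrix.map_apply]
  have hinv : ∀ S, φ S⁻¹ * φ S = 1 := by
    intro S; rw [← hmul, inv_mul_cancel, hone]
  have hinv' : ∀ S, φ S * φ S⁻¹ = 1 := by
    intro S; rw [← hmul, mul_inv_cancel, hone]
  have hdetφ : ∀ S, (φ S).det = 1 := by
    intro S
    have h2 : S.val.det = 1 := S.2
    rw [Matrix.det_fin_two] at h2 ⊢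
    have h3 : ((S.val 0 0 * S.val 1 1 - S.val 0 1 * S.val 1 0 : ℤ) : ℝ) = ((1:ℤ):ℝ) :=
      congrArg _ h2
    push_cast at h3
    simpa [hφ, Matrix.map_apply] using h3
  set cj : Matrix.SpecialLinearGroup (Fin 2) ℤ → Matrix (Fin 2) (Fin 2) ℝ →
      Matrix (Fin 2) (Fin 2) ℝ := fun S X => φ S * X * φ S⁻¹ with hcj
  have hMA' : cj A MA = lam • MA := by
    simp only [hcj, hφ]; exact hMA
  have hcjmul : ∀ S T X, cj (S * T) X = cj S (cj T X) := by
    intro S T X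
    simp only [hcj, hmul, _root_.mul_inv_rev]
    noncomm_ring
  have hcjone : ∀ X, cj 1 X = X := by
    intro X
    simp [hcj, hone, inv_one]
  have hcjsmul : ∀ S (t : ℝ) X, cj S (t • X) = t • cj S X := by
    intro S t X
    simp [hcj, smul_mul_assoc, mul_smul_comm]
  have hcjadd : ∀ S X Y, cj S (X + Y) = cj S X + cj S Y := by
    intro S X Y
    simp only [hcj, mul_add, add_mul]
  have hcjinv : ∀ S X, cj S⁻¹ (cj S X) = X := by
    intro S X
    rw [← hcjmul, inv_mul_cancel, hcjone]
  have hnz : ∀ S (t : ℝ), cj S MA = t • MA → t ≠ 0 := by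
    intro S t h ht
    apply hMA0
    have h2 := hcjinv S MA
    rw [h, ht, zero_smul] at h2
    rw [← h2]
    simp [hcj]
  have hrel : ∀ S (t : ℝ), cj S MA = t • MA → φ S * MA = t • (MA * φ S) := by
    intro S t h
    simp only [hcj] at h
    calc φ S * MA = φ S * MA * (φ S⁻¹ * φ S) := by rw [hinv, mul_one]
      _ = (φ S * MA * φ S⁻¹) * φ S := by noncomm_ring
      _ = (t • MA) * φ S := by rw [h]
      _ = t • (MA * φ S) := smul_mul_assoc t MA (φ S)
  have htr2 : ∀ K : Matrix.SpecialLinearGroup (Fin 2) ℤ, K ∈ Γ →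
      ((K.val 0 0 : ℝ) + (K.val 1 1 : ℝ))^2 = 4 → K = 1 := by
    intro K hKΓ hK
    by_contra hK1
    have h2 := hhyp K hKΓ hK1
    rw [Matrix.trace_fin_two] at h2
    have h3 : ((K.val 0 0 + K.val 1 1 : ℤ) : ℝ)^2 = ((4:ℤ):ℝ) := by
      push_cast
      linarith [hK]
    have h4 : (K.val 0 0 + K.val 1 1)^2 = 4 := by exact_mod_cast h3
    have h5 : (K.val 0 0 + K.val 1 1 - 2) * (K.val 0 0 + K.val 1 1 + 2) = 0 := by
      linear_combination h4
    rcases mul_eq_zero.mp h5 with h6 | h6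
    · have : K.val 0 0 + K.val 1 1 = 2 := by omega
      rw [this] at h2; exact absurd h2 (by decide)
    · have : K.val 0 0 + K.val 1 1 = -2 := by omega
      rw [this] at h2; exact absurd h2 (by decide)
  -- trace of A is nonzero
  have hA2 := hhyp A hAΓ hA1
  rw [Matrix.trace_fin_two] at hA2
  have hadne : ((A.val 0 0 : ℝ) + (A.val 1 1 : ℝ)) ≠ 0 := by
    intro hcast
    have h5 : ((A.val 0 0 + A.val 1 1 : ℤ) : ℝ) = 0 := by push_cast; linarith
    have h6 : A.val 0 0 + A.val 1 1 = 0 := by exact_mod_cast h5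
    rw [h6] at hA2
    exact absurd hA2 (by decide)
  have hre := hrel A lam hMA'
  have EA : ∀ i j, (φ A * MA) i j = (lam • (MA * φ A)) i j := fun i j =>
    congr_fun (congr_fun hre i) j
  have ea00 := EA 0 0
  have ea01 := EA 0 1
  have ea10 := EA 1 0
  have ea11 := EA 1 1
  simp only [hφ, Matrix.mul_apply, Matrix.smul_apply, smul_eq_mul,
    Fin.sum_univ_two, Matrix.map_apply, hm11, ← hp, ← hq, ← hr] at ea00 ea01 ea10 ea11
  have hlamn1 : lam ≠ -1 := by
    intro hl
    rw [hl] at ea00 ea01 ea10 ea11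
    have hq0 : q = 0 := by
      have h5 : ((A.val 0 0 : ℝ) + (A.val 1 1 : ℝ)) * q = 0 := by linear_combination ea01
      exact (mul_eq_zero.mp h5).resolve_left hadne
    have hr0 : r = 0 := by
      have h5 : ((A.val 0 0 : ℝ) + (A.val 1 1 : ℝ)) * r = 0 := by linear_combination ea10
      exact (mul_eq_zero.mp h5).resolve_left hadne
    have hp0 : p = 0 := by
      have h5 : ((A.val 0 0 : ℝ) + (A.val 1 1 : ℝ)) * p = 0 := by
        linear_combination (1/2 : ℝ)*ea00 - (1/2 : ℝ)*ea11
      exact (mul_eq_zero.mp h5).resolve_left hadne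
    exact h0 ⟨hp0, hq0, hr0⟩
  have hlam2 : (1 - lam^2) ≠ 0 := by
    intro h
    have h5 : (1 - lam)*(1 + lam) = 0 := by linear_combination h
    rcases mul_eq_zero.mp h5 with h6 | h6
    · exact hlam (by linarith)
    · exact hlamn1 (by linarith)
  have hdet0 : ∀ X : Matrix (Fin 2) (Fin 2) ℝ, cj A X = lam • X → X.det = 0 := by
    intro X hX
    have h2 : (cj A X).det = X.det := by
      simp only [hcj]
      rw [Matrix.det_mul, Matrix.det_mul, hdetφ, hdetφ]
      ring
    have h3 : (lam • X).det = lam^2 * X.det := by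
      rw [Matrix.det_smul]
      norm_num [Fintype.card_fin]
    have h4 : X.det = lam^2 * X.det := by
      conv_lhs => rw [← h2, hX, h3]
    have h5 : (1 - lam^2) * X.det = 0 := by linear_combination h4
    exact (mul_eq_zero.mp h5).resolve_left hlam2
  have hdMA := hdet0 MA hMA'
  have hpqr : p^2 + q*r = 0 := by
    rw [Matrix.det_fin_two, hm11, ← hp, ← hq, ← hr] at hdMA
    linear_combination -hdMA
  -- KEY: two elements of Γ that both scale MA under conjugation commute
  have key : ∀ S T, S ∈ Γ → T ∈ Γ →
      (∃ s : ℝ, cj S MA = s • MA) → (∃ t : ℝ, cj T MA = t • MA) → S * T = T * S := by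
    rintro S T hS hT ⟨s, hs⟩ ⟨t, ht⟩
    have hs0 := hnz S s hs
    have ht0 := hnz T t ht
    set K := S * T * S⁻¹ * T⁻¹ with hK
    have hKΓ : K ∈ Γ := mul_mem (mul_mem (mul_mem hS hT) (inv_mem hS)) (inv_mem hT)
    have hsi : cj S⁻¹ MA = s⁻¹ • MA := by
      have h2 := congrArg (cj S⁻¹) hs
      rw [hcjinv, hcjsmul] at h2
      rw [eq_comm, inv_smul_eq_iff₀ hs0]
      exact h2
    have hti : cj T⁻¹ MA = t⁻¹ • MA := by
      have h2 := congrArg (cj T⁻¹) ht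
      rw [hcjinv, hcjsmul] at h2
      rw [eq_comm, inv_smul_eq_iff₀ ht0]
      exact h2
    have hKMA : cj K MA = MA := by
      calc cj K MA = cj (S * T * S⁻¹) (cj T⁻¹ MA) := hcjmul _ _ _
        _ = t⁻¹ • cj (S * T * S⁻¹) MA := by rw [hti, hcjsmul]
        _ = t⁻¹ • (s⁻¹ • cj (S * T) MA) := by rw [hcjmul (S*T) S⁻¹ MA, hsi, hcjsmul]
        _ = t⁻¹ • (s⁻¹ • (t • cj S MA)) := by rw [hcjmul S T MA, ht, hcjsmul]
        _ = t⁻¹ • (s⁻¹ • (t • (s • MA))) := by rw [hs]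
        _ = (t⁻¹ * s⁻¹ * t * s) • MA := by rw [smul_smul, smul_smul, smul_smul]
        _ = MA := by
            rw [show t⁻¹ * s⁻¹ * t * s = 1 by field_simp, one_smul]
    have hKcomm : φ K * MA = MA * φ K := by
      have h2 := hrel K 1 (by rw [hKMA, one_smul])
      rw [one_smul] at h2
      exact h2
    -- extract entries
    have E : ∀ i j, (φ K * MA) i j = (MA * φ K) i j := fun i j =>
      congr_fun (congr_fun hKcomm i) j
    have raw00 := E 0 0
    have raw01 := E 0 1
    have raw10 := E 1 0
    simp only [hφ, Matrix.mul_apply, Fin.sum_univ_two, Matrix.map_apply,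
      hm11, ← hp, ← hq, ← hr] at raw00 raw01 raw10
    have hdetK : (K.val 0 0 : ℝ) * (K.val 1 1 : ℝ) -
        (K.val 0 1 : ℝ) * (K.val 1 0 : ℝ) = 1 := by
      have := hdetφ K
      rw [Matrix.det_fin_two] at this
      simpa [hφ, Matrix.map_apply] using this
    have h4 : ((K.val 0 0 : ℝ) + (K.val 1 1 : ℝ))^2 = 4 := by
      apply aux_comm (K.val 0 0 : ℝ) (K.val 0 1 : ℝ) (K.val 1 0 : ℝ) (K.val 1 1 : ℝ)
        p q r hdetK ?_ h0 ?_ ?_ ?_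
      · exact hpqr
      · linear_combination raw00
      · linear_combination raw01
      · linear_combination raw10
    have hK1 : K = 1 := htr2 K hKΓ h4
    rw [hK, mul_inv_eq_one, mul_inv_eq_iff_eq_mul] at hK1
    exact hK1
  -- reverse: commuting elements scale MA
  have hscale : ∀ g : Matrix.SpecialLinearGroup (Fin 2) ℤ, Commute g A →
      ∃ mu : ℝ, cj g MA = mu • MA := by
    intro g hg
    set N := cj g MA with hN
    have hNA : cj A N = lam • N := by
      rw [hN, ← hcjmul, ← hg.eq, hcjmul, hMA', hcjsmul]
    have htrN : N.trace = 0 := by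
      rw [hN]
      simp only [hcj]
      rw [Matrix.trace_mul_cycle, hinv, one_mul]
      exact hMAtr
    have hdN : N.det = 0 := hdet0 N hNA
    have hdS : (MA + N).det = 0 := hdet0 _ (by rw [hcjadd, hMA', hNA, smul_add])
    have hx11 : N 1 1 = -(N 0 0) := by
      rw [Matrix.trace_fin_two] at htrN; linarith
    have h2 : (N 0 0)^2 + (N 0 1)*(N 1 0) = 0 := by
      rw [Matrix.det_fin_two, hx11] at hdN
      linear_combination -hdN
    have h3 : 2*p*(N 0 0) + q*(N 1 0) + r*(N 0 1) = 0 := by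
      rw [Matrix.det_fin_two] at hdS
      simp only [Matrix.add_apply] at hdS
      rw [hm11, hx11, ← hp, ← hq, ← hr] at hdS
      linear_combination -hdS - hpqr - h2
    obtain ⟨mu, hmux, hmuy, hmuz⟩ := aux_prop p q r (N 0 0) (N 0 1) (N 1 0) hpqr h2 h3 h0
    refine ⟨mu, ?_⟩
    ext i j
    fin_cases i <;> fin_cases j
    · show N 0 0 = (mu • MA) 0 0
      rw [Matrix.smul_apply, smul_eq_mul, ← hp]; exact hmux
    · show N 0 1 = (mu • MA) 0 1
      rw [Matrix.smul_apply, smul_eq_mul, ← hq]; exact hmuy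
    · show N 1 0 = (mu • MA) 1 0
      rw [Matrix.smul_apply, smul_eq_mul, ← hr]; exact hmuz
    · show N 1 1 = (mu • MA) 1 1
      rw [Matrix.smul_apply, smul_eq_mul, hm11, hx11]
      linear_combination -hmux
  constructor
  · intro g hgΓ
    constructor
    · rintro ⟨mu, hmu⟩
      have hmu' : cj g MA = mu • MA := by simp only [hcj, hφ]; exact hmu
      exact key g A hgΓ hAΓ ⟨mu, hmu'⟩ ⟨lam, hMA'⟩
    · intro hg
      obtain ⟨mu, hmu⟩ := hscale g hg
      refine ⟨mu, ?_⟩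
      simpa only [hcj, hφ] using hmu
  · -- the centralizer is cyclic
    set D : Subgroup Γ := Subgroup.comap Γ.subtype (Subgroup.centralizer {A}) with hD
    have hmemD : ∀ x : Γ, x ∈ D ↔ Commute (x : Matrix.SpecialLinearGroup (Fin 2) ℤ) A := by
      intro x
      rw [hD, Subgroup.mem_comap, Subgroup.mem_centralizer_iff]
      constructor
      · intro h
        exact (h A (Set.mem_singleton A)).symm
      · intro h y hy
        rw [Set.mem_singleton_iff] at hy
        subst hy
        exact h.symm
    have hDcomm : ∀ x y : D, x * y = y * x := by
      intro x y
      have hx : Commute ((x : Γ) : Matrix.SpecialLinearGroup (Fin 2) ℤ) A := (hmemD x.1).mp x.2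
      have hy : Commute ((y : Γ) : Matrix.SpecialLinearGroup (Fin 2) ℤ) A := (hmemD y.1).mp y.2
      obtain ⟨sx, hsx⟩ := hscale _ hx
      obtain ⟨sy, hsy⟩ := hscale _ hy
      have h5 := key _ _ (x.1.2) (y.1.2) ⟨sx, hsx⟩ ⟨sy, hsy⟩
      apply Subtype.ext
      apply Subtype.ext
      push_cast
      exact h5
    obtain ⟨m, hmgen⟩ := aux_cyclic D hDcomm
    have hMΓ : ((m : Γ) : Matrix.SpecialLinearGroup (Fin 2) ℤ) ∈ Γ := (m : Γ).2
    have hMAc : Commute ((m : Γ) : Matrix.SpecialLinearGroup (Fin 2) ℤ) A := (hmemD m.1).mp m.2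
    refine ⟨((m : Γ) : Matrix.SpecialLinearGroup (Fin 2) ℤ), hMΓ, fun g => ?_⟩
    constructor
    · rintro ⟨hgΓ, hgA⟩
      have hmem : (⟨g, hgΓ⟩ : Γ) ∈ D := (hmemD ⟨g, hgΓ⟩).mpr hgA
      obtain ⟨n, hn⟩ := hmgen ⟨⟨g, hgΓ⟩, hmem⟩
      rw [Subgroup.mem_zpowers_iff]
      refine ⟨n, ?_⟩
      have h6 := congrArg (fun u : D => ((u : Γ) : Matrix.SpecialLinearGroup (Fin 2) ℤ)) hn
      simp only [SubgroupClass.coe_zpow] at h6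
      exact h6.symm
    · intro hg
      rw [Subgroup.mem_zpowers_iff] at hg
      obtain ⟨n, hn⟩ := hg
      constructor
      · rw [← hn]
        exact zpow_mem hMΓ n
      · rw [← hn]
        exact hMAc.zpow_left n
end
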